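/- arXiv:1502.01779 — 2 statements merged into one kernel-verified Lean document; each statement's English description precedes it below -/
import Mathlib

section
/- Let K ⊆ ℝ³ be the convex hull of the seven points a = (0,0,0), b = (1,0,0), c = (0,0,−1), d = (1,0,−1), e = (1/2,1/2,1/2), f = (0,1,0), g = (1,1,0), and let F be the convex hull of {a, b, c, d} (the facet of K in the plane y = 0). Then there is a constant c₀ > 0 such that for every positive integer m there exist translation vectors t₁, …, t₍₂ₘ₎ ∈ ℝ³ for which, setting U = K ∪ ⋃_{i=1}^{2m} (tᵢ + K), at least c₀·m² connected components of ℝ³ ∖ U have closure intersecting F. -/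
/-!
The `m` fins are translates of `K` by `(0, -1, hᵢ)`; their ridges lie on `F` along the horizontal
segments `z = hᵢ`, spaced `δ = 1 / (8 m²)` apart. The `m` caps are translates by
`(cⱼ, -1/2, -11/20)`; the plane `y = 0` passes through their apexes, and their roofs, of slopes
`±1` and spaced `(2m - 1) δ` apart, form a sawtooth whose valleys span all fin heights. Just
behind `F`, fins `i`, `i + 1` and the valley between caps `j`, `j + 1` enclose an open convex cell
whose frontier lies in `U` and whose closure meets `F`: these are `(m - 1)²` distinct holes
touching `F`.

Since `Set.ncard` vanishes on infinite sets, one also needs that no other hole touches `F`. A point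
outside `U` near `F` either lies in a cell or escapes along an axis-parallel ray to a fixed
unbounded region: every translate of `K` meets such a line in an interval, and the case analysis
places the point beyond the near end of each of these intervals. Hence exactly `(m - 1)² + 1`
holes touch `F`.
-/

open Pointwise

/-- The polytope `K` of the warm-up construction: the convex hull of seven points. -/
noncomputable def Kwarm : Set (Fin 3 → ℝ) :=
  convexHull ℝ
    ({![0, 0, 0], ![1, 0, 0], ![0, 0, -1], ![1, 0, -1],
      ![1/2, 1/2, 1/2], ![0, 1, 0], ![1, 1, 0]} : Set (Fin 3 → ℝ))

/-- The facet `F` of `Kwarm` in the plane `y = 0`. -/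
noncomputable def Fwarm : Set (Fin 3 → ℝ) :=
  convexHull ℝ ({![0, 0, 0], ![1, 0, 0], ![0, 0, -1], ![1, 0, -1]} : Set (Fin 3 → ℝ))

open Set Topology Filter

namespace ManyHoles

theorem exists_lt_and_not_succ {P : ℕ → Prop} {n : ℕ} (h0 : P 0) (hn : ¬P n) :
    ∃ k < n, P k ∧ ¬P (k + 1) := by
  induction n with
  | zero => exact absurd h0 hn
  | succ n ih =>
    by_cases h : P n
    · exact ⟨n, n.lt_succ_self, h, hn⟩
    · obtain ⟨k, hk, hPk, hPk'⟩ := ih h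
      exact ⟨k, by omega, hPk, hPk'⟩

section Topology

variable {X : Type*} [TopologicalSpace X]

theorem connectedComponentIn_eq_of_frontier_subset {S V : Set X} (hVo : IsOpen V)
    (hVc : IsPreconnected V) (hVS : V ⊆ S) (hfr : frontier V ⊆ Sᶜ) {p : X} (hp : p ∈ V) :
    connectedComponentIn S p = V := by
  refine (isPreconnected_connectedComponentIn.subset_of_closure_inter_subset hVo
    ⟨p, mem_connectedComponentIn (hVS hp), hp⟩ ?_).antisymm
    (hVc.subset_connectedComponentIn hp hVS)
  rintro x ⟨hxV, hxS⟩
  by_contra hx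
  exact hfr ⟨hxV, by rwa [hVo.interior_eq]⟩ (connectedComponentIn_subset _ _ hxS)

variable {E : Type*} [AddCommGroup E] [Module ℝ E] [TopologicalSpace E] [ContinuousAdd E]
  [ContinuousSMul ℝ E]

theorem connectedComponentIn_eq_of_ray {S G : Set E} (hG : IsPreconnected G) (hGS : G ⊆ S)
    {p v g : E} {T : ℝ} (hT : 0 ≤ T) (hp : p ∈ S) (hray : ∀ s : ℝ, 0 < s → p + s • v ∈ S)
    (hTG : p + T • v ∈ G) (hg : g ∈ G) :
    connectedComponentIn S p = connectedComponentIn S g := by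
  set R := (fun s : ℝ => p + s • v) '' Icc 0 T
  have hR : IsPreconnected R := isPreconnected_Icc.image _ (by fun_prop)
  have hRS : R ⊆ S := by
    rintro _ ⟨s, ⟨hs, -⟩, rfl⟩
    rcases hs.eq_or_lt with rfl | hs
    · simpa using hp
    · exact hray s hs
  have hpR : p ∈ R := ⟨0, ⟨le_rfl, hT⟩, by simp⟩
  have hTR : p + T • v ∈ R := ⟨T, ⟨hT, le_rfl⟩, rfl⟩
  have hRG := (hR.union _ hTR hTG hG).subset_connectedComponentIn (Or.inl hpR)
    (union_subset hRS hGS)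
  exact connectedComponentIn_eq (hRG (Or.inr hg))

theorem mem_closure_of_ray {C : Set E} {p v : E} {ε : ℝ} (hε : 0 < ε)
    (h : ∀ s : ℝ, 0 < s → s < ε → p + s • v ∈ C) : p ∈ closure C := by
  refine mem_closure_of_tendsto (b := 𝓝[>] (0 : ℝ)) (f := fun s => p + s • v) ?_ ?_
  · have : Tendsto (fun s : ℝ => p + s • v) (𝓝 0) (𝓝 (p + (0 : ℝ) • v)) :=
      (by fun_prop : Continuous fun s : ℝ => p + s • v).tendsto 0
    rw [zero_smul, add_zero] at this
    exact tendsto_nhdsWithin_of_tendsto_nhds this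
  · filter_upwards [Ioo_mem_nhdsGT hε] with s hs using h s hs.1 hs.2

end Topology

abbrev V3 := Fin 3 → ℝ

/-- `Kwarm` is the wedge `0 ≤ x ≤ 1`, `0 ≤ y`, `y - 1 ≤ z ≤ 0` with the square pyramid of apex
`(1/2, 1/2, 1/2)` on top; this is its description by eight half-spaces. -/
def InK (x y z : ℝ) : Prop :=
  0 ≤ y ∧ z ≤ y ∧ y + z ≤ 1 ∧ y - 1 ≤ z ∧ 0 ≤ x ∧ x ≤ 1 ∧ z ≤ x ∧ z ≤ 1 - x

section InK

variable {x y z u : ℝ}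

theorem InK.of_le_z (h : InK x y u) (hz : y - 1 ≤ z) (hzu : z ≤ u) : InK x y z := by
  obtain ⟨h1, h2, h3, h4, h5, h6, h7, h8⟩ := h
  exact ⟨h1, by linarith, by linarith, hz, h5, h6, by linarith, by linarith⟩

theorem InK.of_le_x (h : InK u y z) (hx : 0 ≤ x) (hzx : z ≤ x) (hxu : x ≤ u) : InK x y z := by
  obtain ⟨h1, h2, h3, h4, h5, h6, h7, h8⟩ := h
  exact ⟨h1, h2, h3, h4, hx, by linarith, hzx, by linarith⟩

theorem InK.of_ge_x (h : InK u y z) (hx : x ≤ 1) (hzx : z ≤ 1 - x) (hux : u ≤ x) :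
    InK x y z := by
  obtain ⟨h1, h2, h3, h4, h5, h6, h7, h8⟩ := h
  exact ⟨h1, h2, h3, h4, by linarith, hx, by linarith, hzx⟩

end InK

theorem convex_setOf_InK : Convex ℝ {p : V3 | InK (p 0) (p 1) (p 2)} := by
  rintro a ⟨a1, a2, a3, a4, a5, a6, a7, a8⟩ b ⟨b1, b2, b3, b4, b5, b6, b7, b8⟩ s t hs ht hst
  simp only [mem_ofPred_eq, InK, Pi.add_apply, Pi.smul_apply, smul_eq_mul]
  refine ⟨?_, ?_, ?_, ?_, ?_, ?_, ?_, ?_⟩ <;> nlinarith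

theorem mem_Kwarm_of_weights {p : V3} (w : Fin 7 → ℝ) (hw : ∀ i, 0 ≤ w i) (hsum : ∑ i, w i = 1)
    (hx : w 1 + w 3 + w 4 / 2 + w 6 = p 0) (hy : w 4 / 2 + w 5 + w 6 = p 1)
    (hz : w 4 / 2 - w 2 - w 3 = p 2) : p ∈ Kwarm := by
  let v : Fin 7 → V3 :=
    ![![0, 0, 0], ![1, 0, 0], ![0, 0, -1], ![1, 0, -1], ![1/2, 1/2, 1/2], ![0, 1, 0], ![1, 1, 0]]
  have hp : p = ∑ i, w i • v i := by
    funext k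
    fin_cases k <;> simp [v, Fin.sum_univ_seven] <;> linarith
  rw [hp]
  exact (convex_convexHull ℝ _).sum_mem (fun i _ => hw i) hsum
    (fun i _ => subset_convexHull ℝ _ (by fin_cases i <;> simp [v]))

theorem mem_Kwarm_iff {p : V3} : p ∈ Kwarm ↔ InK (p 0) (p 1) (p 2) := by
  constructor
  · refine fun hp => convexHull_min ?_ convex_setOf_InK hp
    simp [insert_subset_iff, InK]
    norm_num
  · rintro ⟨h1, h2, h3, h4, h5, h6, h7, h8⟩
    set x := p 0
    set y := p 1
    set z := p 2
    rcases le_total z 0 with hz | hz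
    -- the wedge `z ≤ 0` is a triangular prism: barycentric weights in `(y, z)` times those in `x`
    · refine mem_Kwarm_of_weights
        ![(1 - x) * (1 + z - y), x * (1 + z - y), (1 - x) * -z, x * -z, 0, (1 - x) * y, x * y]
        (fun i => by fin_cases i <;> simp <;> nlinarith) ?_ ?_ ?_ ?_ <;>
        simp [Fin.sum_univ_seven] <;> ring
    -- the pyramid `z ≥ 0` is cut by `x + y = 1` into two tetrahedra
    rcases le_total (x + y) 1 with hxy | hxy
    · refine mem_Kwarm_of_weights ![1 - x - y, x - z, 0, 0, 2 * z, y - z, 0]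
        (fun i => by fin_cases i <;> simp <;> linarith) ?_ ?_ ?_ ?_ <;>
        simp [Fin.sum_univ_seven] <;> ring
    · refine mem_Kwarm_of_weights ![0, 1 - y - z, 0, 0, 2 * z, 1 - x - z, x + y - 1]
        (fun i => by fin_cases i <;> simp <;> linarith) ?_ ?_ ?_ ?_ <;>
        simp [Fin.sum_univ_seven] <;> ring

theorem mem_vadd_Kwarm_iff {t p : V3} :
    p ∈ t +ᵥ Kwarm ↔ InK (p 0 - t 0) (p 1 - t 1) (p 2 - t 2) := by
  rw [mem_vadd_set_iff_neg_vadd_mem, mem_Kwarm_iff]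
  simp [sub_eq_neg_add]

theorem mem_Fwarm_iff {p : V3} :
    p ∈ Fwarm ↔ 0 ≤ p 0 ∧ p 0 ≤ 1 ∧ p 1 = 0 ∧ -1 ≤ p 2 ∧ p 2 ≤ 0 := by
  constructor
  · refine fun hp => (convexHull_min ?_ ?_ hp :
      p ∈ {q : V3 | 0 ≤ q 0 ∧ q 0 ≤ 1 ∧ q 1 = 0 ∧ -1 ≤ q 2 ∧ q 2 ≤ 0})
    · simp [insert_subset_iff]
    · rintro a ⟨a1, a2, a3, a4, a5⟩ b ⟨b1, b2, b3, b4, b5⟩ s t hs ht hst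
      simp only [mem_ofPred_eq, Pi.add_apply, Pi.smul_apply, smul_eq_mul, a3, b3]
      refine ⟨?_, ?_, by ring, ?_, ?_⟩ <;> nlinarith
  · rintro ⟨h1, h2, h3, h4, h5⟩
    set x := p 0
    set z := p 2
    let v : Fin 4 → V3 := ![![0, 0, 0], ![1, 0, 0], ![0, 0, -1], ![1, 0, -1]]
    let w : Fin 4 → ℝ := ![(1 - x) * (1 + z), x * (1 + z), (1 - x) * -z, x * -z]
    have hp : p = ∑ i, w i • v i := by
      funext k
      fin_cases k <;> simp [v, w, Fin.sum_univ_four] <;> linarith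
    rw [hp]
    exact (convex_convexHull ℝ _).sum_mem
      (fun i _ => by fin_cases i <;> simp [w] <;> nlinarith)
      (by simp [w, Fin.sum_univ_four]; ring)
      (fun i _ => subset_convexHull ℝ _ (by fin_cases i <;> simp [v]))

noncomputable def finGap (m : ℕ) : ℝ := 1 / (8 * m ^ 2)

noncomputable def capGap (m : ℕ) : ℝ := (2 * m - 1) * finGap m

noncomputable def finHeight (m i : ℕ) : ℝ := -1/20 - finGap m / 2 - i * finGap m

noncomputable def capPos (m j : ℕ) : ℝ := 1/8 + j * capGap m

noncomputable def finShift (m i : ℕ) : V3 := ![0, -1, finHeight m i]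

noncomputable def capShift (m j : ℕ) : V3 := ![capPos m j, -1/2, -11/20]

noncomputable def shift (m : ℕ) (k : Fin (2 * m)) : V3 :=
  if (k : ℕ) < m then finShift m k else capShift m (k - m)

noncomputable def U (m : ℕ) : Set V3 := Kwarm ∪ ⋃ k, shift m k +ᵥ Kwarm

def InU (m : ℕ) (x y z : ℝ) : Prop :=
  InK x y z ∨ (∃ i < m, InK x (y + 1) (z - finHeight m i)) ∨
    ∃ j < m, InK (x - capPos m j) (y + 1/2) (z + 11/20)

section Parameters

variable {m : ℕ} (hm : 0 < m)
include hm

theorem finGap_pos : 0 < finGap m := by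
  unfold finGap
  positivity

theorem natCast_mul_finGap_le : (m : ℝ) * finGap m ≤ 1/8 := by
  have h1 : (1 : ℝ) ≤ m := by exact_mod_cast hm
  unfold finGap
  rw [mul_one_div, div_le_div_iff₀ (by positivity) (by norm_num)]
  nlinarith

theorem finGap_le : finGap m ≤ 1/8 := by
  have h1 : (1 : ℝ) ≤ m := by exact_mod_cast hm
  nlinarith [natCast_mul_finGap_le hm, finGap_pos hm]

theorem capGap_pos : 0 < capGap m := by
  have h1 : (1 : ℝ) ≤ m := by exact_mod_cast hm
  unfold capGap
  nlinarith [finGap_pos hm]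

theorem finHeight_anti {i j : ℕ} (hij : i ≤ j) : finHeight m j ≤ finHeight m i := by
  have : (i : ℝ) ≤ j := by exact_mod_cast hij
  unfold finHeight
  nlinarith [finGap_pos hm]

theorem finHeight_le (i : ℕ) : finHeight m i ≤ -1/20 - finGap m / 2 := by
  unfold finHeight
  nlinarith [finGap_pos hm, (Nat.cast_nonneg i : (0 : ℝ) ≤ i)]

theorem le_finHeight {i : ℕ} (hi : i < m) : -7/40 + finGap m / 2 ≤ finHeight m i := by
  have : (i : ℝ) + 1 ≤ m := by exact_mod_cast hi
  unfold finHeight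
  nlinarith [finGap_pos hm, natCast_mul_finGap_le hm]

theorem capPos_mono {i j : ℕ} (hij : i ≤ j) : capPos m i ≤ capPos m j := by
  have : (i : ℝ) ≤ j := by exact_mod_cast hij
  unfold capPos
  nlinarith [capGap_pos hm]

theorem le_capPos (j : ℕ) : 1/8 ≤ capPos m j := by
  unfold capPos
  nlinarith [capGap_pos hm, (Nat.cast_nonneg j : (0 : ℝ) ≤ j)]

theorem capPos_le {j : ℕ} (hj : j < m) : capPos m j ≤ 3/8 := by
  have h1 : (j : ℝ) + 1 ≤ m := by exact_mod_cast hj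
  have h2 : (m : ℝ) ^ 2 * finGap m = 1/8 := by
    unfold finGap
    field_simp
  unfold capPos capGap
  nlinarith [finGap_pos hm, sq_nonneg ((j : ℝ) + 1 - m)]

end Parameters

theorem finHeight_succ (m i : ℕ) : finHeight m (i + 1) = finHeight m i - finGap m := by
  unfold finHeight
  push_cast
  ring

theorem capPos_succ (m j : ℕ) : capPos m (j + 1) = capPos m j + capGap m := by
  unfold capPos
  push_cast
  ring

theorem capPos_zero (m : ℕ) : capPos m 0 = 1/8 := by
  simp [capPos]

theorem finHeight_gt {m i : ℕ} (hi : i + 1 < m) :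
    -1/20 - capGap m / 2 + finGap m / 2 < finHeight m i := by
  have : (i : ℝ) + 2 ≤ m := by exact_mod_cast hi
  unfold finHeight capGap
  nlinarith [finGap_pos (show 0 < m by omega)]

/-- The lowest fin passes through the points where the roofs of adjacent caps cross. -/
theorem capGap_eq_finHeight_last {m : ℕ} (hm : 0 < m) :
    capGap m = 1 - 2 * (finHeight m (m - 1) + 11/20) := by
  unfold capGap finHeight
  rw [Nat.cast_sub hm]
  push_cast
  ring

theorem mem_U_iff {m : ℕ} {p : V3} : p ∈ U m ↔ InU m (p 0) (p 1) (p 2) := by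
  have hA (i : ℕ) : p ∈ finShift m i +ᵥ Kwarm ↔ InK (p 0) (p 1 + 1) (p 2 - finHeight m i) := by
    simp [mem_vadd_Kwarm_iff, finShift]
  have hC (j : ℕ) :
      p ∈ capShift m j +ᵥ Kwarm ↔ InK (p 0 - capPos m j) (p 1 + 1/2) (p 2 + 11/20) := by
    simp [mem_vadd_Kwarm_iff, capShift]
    norm_num
  simp only [U, InU, mem_union, mem_iUnion, mem_Kwarm_iff, ← hA, ← hC]
  refine or_congr_right ⟨?_, ?_⟩
  · rintro ⟨k, hk⟩
    unfold shift at hk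
    split_ifs at hk with h
    · exact Or.inl ⟨k, h, hk⟩
    · exact Or.inr ⟨k - m, by omega, hk⟩
  · rintro (⟨i, hi, h⟩ | ⟨j, hj, h⟩)
    · exact ⟨⟨i, by omega⟩, by simpa [shift, hi] using h⟩
    · exact ⟨⟨m + j, by omega⟩, by simpa [shift] using h⟩

def outer : Set V3 :=
  {p | p 0 < 0} ∪ {p | 1 < p 1 + p 2} ∪ {p | 2 < p 0} ∪ {p | p 2 - p 1 < -21/20}

noncomputable def outerComponent (m : ℕ) : Set V3 := connectedComponentIn (U m)ᶜ ![-1, -1, 0]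

theorem isPreconnected_outer : IsPreconnected outer := by
  have l0 : IsLinearMap ℝ fun p : V3 => p 0 := ⟨fun _ _ => rfl, fun _ _ => rfl⟩
  have l12 : IsLinearMap ℝ fun p : V3 => p 1 + p 2 :=
    ⟨fun p q => by simp only [Pi.add_apply]; ring,
      fun r p => by simp only [Pi.smul_apply, smul_eq_mul]; ring⟩
  have l21 : IsLinearMap ℝ fun p : V3 => p 2 - p 1 :=
    ⟨fun p q => by simp only [Pi.add_apply]; ring,
      fun r p => by simp only [Pi.smul_apply, smul_eq_mul]; ring⟩
  have h1 := (convex_halfSpace_lt l0 0).isPreconnected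
  have h2 := (convex_halfSpace_gt l12 1).isPreconnected
  have h3 := (convex_halfSpace_gt l0 2).isPreconnected
  have h4 := (convex_halfSpace_lt l21 (-21/20)).isPreconnected
  have h12 := h1.union ![-1, 3, 0] (by simp) (by simp) h2
  have h123 := h12.union ![3, 3, 0] (Or.inr (by simp)) (by simp; norm_num) h3
  exact h123.union ![-1, 0, -3] (Or.inl (Or.inl (by simp))) (by simp; norm_num) h4

theorem outer_subset_compl {m : ℕ} (hm : 0 < m) : outer ⊆ (U m)ᶜ := by
  intro p hp hpU
  rcases mem_U_iff.1 hpU with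
    ⟨_, _, _, _, _, _, _, _⟩ | ⟨i, hi, _, _, _, _, _, _, _, _⟩ | ⟨j, hj, _, _, _, _, _, _, _, _⟩
  · rcases hp with ((h | h) | h) | h <;> simp only [mem_ofPred_eq] at h <;> linarith
  · have := finGap_pos hm
    have := le_finHeight hm hi
    have := finHeight_le hm i
    rcases hp with ((h | h) | h) | h <;> simp only [mem_ofPred_eq] at h <;> linarith
  · have := le_capPos hm j
    have := capPos_le hm hj
    rcases hp with ((h | h) | h) | h <;> simp only [mem_ofPred_eq] at h <;> linarith

section Escape

variable {m : ℕ} (hm : 0 < m) {p : V3}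
include hm

theorem connectedComponentIn_eq_outer_of_ray {v : V3} {T : ℝ} (hT : 0 ≤ T) (hp : p ∉ U m)
    (hray : ∀ s : ℝ, 0 < s → p + s • v ∉ U m) (hTG : p + T • v ∈ outer) :
    connectedComponentIn (U m)ᶜ p = outerComponent m :=
  connectedComponentIn_eq_of_ray isPreconnected_outer (outer_subset_compl hm) hT hp hray hTG
    (Or.inl (Or.inl (Or.inl (by simp))))

theorem connectedComponentIn_eq_outer_of_mem (hp : p ∈ outer) :
    connectedComponentIn (U m)ᶜ p = outerComponent m :=
  connectedComponentIn_eq_outer_of_ray hm le_rfl (outer_subset_compl hm hp) (v := 0)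
    (fun _ _ => by simpa using outer_subset_compl hm hp) (by simpa using hp)

theorem connectedComponentIn_eq_outer_of_up (hp : p ∉ U m)
    (hz : p 1 + finHeight m 0 ≤ p 2) :
    connectedComponentIn (U m)ᶜ p = outerComponent m := by
  have := le_finHeight hm hm
  have := finGap_pos hm
  refine connectedComponentIn_eq_outer_of_ray hm (v := ![0, 0, 1]) (T := 2 + |p 1| + |p 2|)
    (by positivity) hp (fun s hs hps => hp ?_) (Or.inl (Or.inl (Or.inr ?_)))
  · rw [mem_U_iff] at hps ⊢
    simp at hps
    rcases hps with h | ⟨i, hi, h⟩ | ⟨j, hj, h⟩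
    · exact Or.inl (h.of_le_z (by linarith) (by linarith))
    · refine Or.inr (Or.inl ⟨i, hi, h.of_le_z ?_ (by linarith)⟩)
      linarith [finHeight_anti hm (Nat.zero_le i)]
    · exact Or.inr (Or.inr ⟨j, hj, h.of_le_z (by linarith) (by linarith)⟩)
  · simp only [mem_ofPred_eq, Pi.add_apply, Pi.smul_apply, smul_eq_mul]
    simp
    linarith [neg_abs_le (p 1), neg_abs_le (p 2)]

theorem connectedComponentIn_eq_outer_of_right (hp : p ∉ U m)
    (hC : ∀ j < m, capPos m j ≤ p 0 ∧ capPos m j + p 2 + 11/20 ≤ p 0) :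
    connectedComponentIn (U m)ᶜ p = outerComponent m := by
  obtain ⟨h0, h0'⟩ := hC 0 hm
  rw [capPos_zero] at h0 h0'
  refine connectedComponentIn_eq_outer_of_ray hm (v := ![1, 0, 0]) (T := 3 + |p 0|)
    (by positivity) hp (fun s hs hps => hp ?_) (Or.inl (Or.inr ?_))
  · rw [mem_U_iff] at hps ⊢
    simp at hps
    rcases hps with h | ⟨i, hi, h⟩ | ⟨j, hj, h⟩
    · exact Or.inl (h.of_le_x (by linarith) (by linarith) (by linarith))
    · refine Or.inr (Or.inl ⟨i, hi, h.of_le_x (by linarith) ?_ (by linarith)⟩)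
      linarith [le_finHeight hm hi, finGap_pos hm]
    · obtain ⟨hj1, hj2⟩ := hC j hj
      exact Or.inr (Or.inr ⟨j, hj, h.of_le_x (by linarith) (by linarith) (by linarith)⟩)
  · simp only [mem_ofPred_eq, Pi.add_apply, Pi.smul_apply, smul_eq_mul]
    simp
    linarith [neg_abs_le (p 0)]

theorem connectedComponentIn_eq_outer_of_left (hp : p ∉ U m) (hx : p 0 ≤ 1)
    (hC : ∀ j < m, p 0 + p 2 + 11/20 ≤ capPos m j + 1) :
    connectedComponentIn (U m)ᶜ p = outerComponent m := by
  have h0 := hC 0 hm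
  rw [capPos_zero] at h0
  refine connectedComponentIn_eq_outer_of_ray hm (v := ![-1, 0, 0]) (T := 1 + |p 0|)
    (by positivity) hp (fun s hs hps => hp ?_) (Or.inl (Or.inl (Or.inl ?_)))
  · rw [mem_U_iff] at hps ⊢
    simp at hps
    rcases hps with h | ⟨i, hi, h⟩ | ⟨j, hj, h⟩
    · exact Or.inl (h.of_ge_x hx (by linarith) (by linarith))
    · refine Or.inr (Or.inl ⟨i, hi, h.of_ge_x hx ?_ (by linarith)⟩)
      linarith [le_finHeight hm hi, finGap_pos hm]
    · exact Or.inr (Or.inr ⟨j, hj, h.of_ge_x (by linarith [le_capPos hm j])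
        (by linarith [hC j hj]) (by linarith)⟩)
  · simp only [mem_ofPred_eq, Pi.add_apply, Pi.smul_apply, smul_eq_mul]
    simp
    linarith [le_abs_self (p 0)]

end Escape

/-- The region of `y < 0` enclosed by fins `i`, `i + 1` and the inner roofs of caps `j`,
`j + 1`. -/
def cell (m i j : ℕ) : Set V3 :=
  {p | p 1 < 0 ∧ p 2 - p 1 < finHeight m i ∧ finHeight m (i + 1) < p 2 + p 1 ∧
    capPos m j + 9/20 < p 0 + p 2 ∧ p 0 - p 2 < capPos m (j + 1) + 11/20}

section Cells

variable {m i j : ℕ}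

theorem isOpen_cell : IsOpen (cell m i j) := by
  simp only [cell, ofPred_and]
  refine (isOpen_lt ?_ ?_).inter ((isOpen_lt ?_ ?_).inter ((isOpen_lt ?_ ?_).inter
    ((isOpen_lt ?_ ?_).inter (isOpen_lt ?_ ?_)))) <;> fun_prop

theorem convex_cell : Convex ℝ (cell m i j) := by
  simp only [cell, ofPred_and]
  refine (convex_halfSpace_lt ⟨?_, ?_⟩ _).inter ((convex_halfSpace_lt ⟨?_, ?_⟩ _).inter
    ((convex_halfSpace_gt ⟨?_, ?_⟩ _).inter ((convex_halfSpace_gt ⟨?_, ?_⟩ _).inter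
    (convex_halfSpace_lt ⟨?_, ?_⟩ _)))) <;> intros <;>
    simp only [Pi.add_apply, Pi.smul_apply, smul_eq_mul] <;> ring

theorem closure_cell_subset : closure (cell m i j) ⊆
    {p | p 1 ≤ 0 ∧ p 2 - p 1 ≤ finHeight m i ∧ finHeight m (i + 1) ≤ p 2 + p 1 ∧
      capPos m j + 9/20 ≤ p 0 + p 2 ∧ p 0 - p 2 ≤ capPos m (j + 1) + 11/20} := by
  refine closure_minimal (fun p ⟨h1, h2, h3, h4, h5⟩ => ⟨h1.le, h2.le, h3.le, h4.le, h5.le⟩) ?_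
  simp only [ofPred_and]
  refine (isClosed_le ?_ ?_).inter ((isClosed_le ?_ ?_).inter ((isClosed_le ?_ ?_).inter
    ((isClosed_le ?_ ?_).inter (isClosed_le ?_ ?_)))) <;> fun_prop

theorem mem_cell (hi : i + 1 < m) {s : ℝ} (hs0 : 0 < s) (hs : s < finGap m / 2) :
    ![capPos m j + (1 + capGap m) / 2, -s, finHeight m i - finGap m / 2] ∈ cell m i j := by
  have := finHeight_gt hi
  have := finHeight_succ m i
  have := capPos_succ m j
  simp only [cell, mem_ofPred_eq]
  simp
  refine ⟨?_, ?_, ?_, ?_, ?_⟩ <;> linarith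

variable (hm : 0 < m)
include hm

theorem cell_subset_compl : cell m i j ⊆ (U m)ᶜ := by
  rintro p ⟨c1, c2, c3, c4, c5⟩ hpU
  rcases mem_U_iff.1 hpU with
    ⟨_, _, _, _, _, _, _, _⟩ | ⟨k, hk, _, _, _, _, _, _, _, _⟩ | ⟨k, hk, _, _, _, _, _, _, _, _⟩
  · linarith
  · rcases le_or_gt k i with hki | hki
    · linarith [finHeight_anti hm hki]
    · linarith [finHeight_anti hm (show i + 1 ≤ k by omega)]
  · rcases le_or_gt k j with hkj | hkj
    · linarith [capPos_mono hm hkj]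
    · linarith [capPos_mono hm (show j + 1 ≤ k by omega)]

theorem frontier_cell_subset (hi : i + 1 < m) (hj : j + 1 < m) :
    frontier (cell m i j) ⊆ U m := by
  intro p hp
  obtain ⟨e1, e2, e3, e4, e5⟩ := closure_cell_subset (frontier_subset_closure hp)
  have hpc : p ∉ cell m i j := fun h => hp.2 (isOpen_cell.interior_eq.symm ▸ h)
  have := finGap_pos hm
  have := finHeight_le hm i
  have := le_finHeight hm hi
  have := finHeight_succ m i
  have := le_capPos hm j
  have := capPos_le hm hj
  rw [mem_U_iff]
  rcases e1.eq_or_lt with q1 | q1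
  · exact Or.inl (by refine ⟨?_, ?_, ?_, ?_, ?_, ?_, ?_, ?_⟩ <;> linarith)
  rcases e2.eq_or_lt with q2 | q2
  · exact Or.inr (Or.inl ⟨i, by omega, by refine ⟨?_, ?_, ?_, ?_, ?_, ?_, ?_, ?_⟩ <;> linarith⟩)
  rcases e3.eq_or_lt with q3 | q3
  · exact Or.inr (Or.inl ⟨i + 1, hi, by refine ⟨?_, ?_, ?_, ?_, ?_, ?_, ?_, ?_⟩ <;> linarith⟩)
  rcases e4.eq_or_lt with q4 | q4
  · exact Or.inr (Or.inr ⟨j, by omega, by refine ⟨?_, ?_, ?_, ?_, ?_, ?_, ?_, ?_⟩ <;> linarith⟩)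
  rcases e5.eq_or_lt with q5 | q5
  · exact Or.inr (Or.inr ⟨j + 1, hj, by refine ⟨?_, ?_, ?_, ?_, ?_, ?_, ?_, ?_⟩ <;> linarith⟩)
  exact absurd ⟨q1, q2, q3, q4, q5⟩ hpc

theorem connectedComponentIn_eq_cell (hi : i + 1 < m) (hj : j + 1 < m) {p : V3}
    (hp : p ∈ cell m i j) : connectedComponentIn (U m)ᶜ p = cell m i j :=
  connectedComponentIn_eq_of_frontier_subset isOpen_cell convex_cell.isPreconnected
    (cell_subset_compl hm) (by simpa using frontier_cell_subset hm hi hj) hp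

theorem cell_touches_facet (hi : i + 1 < m) (hj : j + 1 < m) :
    (closure (cell m i j) ∩ Fwarm).Nonempty := by
  have hδ := finGap_pos hm
  refine ⟨![capPos m j + (1 + capGap m) / 2, 0, finHeight m i - finGap m / 2],
    mem_closure_of_ray (v := ![0, -1, 0]) (ε := finGap m / 2) (by positivity)
      fun s hs0 hs => ?_, ?_⟩
  · convert mem_cell hi hs0 hs using 1
    ext k
    fin_cases k <;> simp
  · have := capGap_pos hm
    have := capPos_le hm (show j < m by omega)
    have := le_capPos hm j
    have := le_finHeight hm (show i < m by omega)
    have := finHeight_le hm i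
    have : capGap m ≤ 1/4 := by
      unfold capGap
      nlinarith [natCast_mul_finGap_le hm]
    rw [mem_Fwarm_iff]
    simp
    refine ⟨?_, ?_, ?_, ?_⟩ <;> linarith

theorem cell_inj {i' j' : ℕ} (hi : i + 1 < m) (h : cell m i j = cell m i' j') :
    i = i' ∧ j = j' := by
  have hδ := finGap_pos hm
  have hp := mem_cell (j := j) hi (s := finGap m / 4) (by positivity) (by linarith)
  rw [h] at hp
  obtain ⟨-, d2, d3, d4, d5⟩ := hp
  simp at d2 d3 d4 d5
  have := finHeight_le hm i
  have := finHeight_succ m i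
  have := finHeight_succ m i'
  have := capPos_succ m j
  have := capPos_succ m j'
  have := capGap_pos hm
  refine ⟨le_antisymm (not_lt.1 fun h' => ?_) (not_lt.1 fun h' => ?_),
    le_antisymm (not_lt.1 fun h' => ?_) (not_lt.1 fun h' => ?_)⟩
  · linarith [finHeight_anti hm (show i' + 1 ≤ i by omega)]
  · linarith [finHeight_anti hm (show i + 1 ≤ i' by omega)]
  · linarith [capPos_mono hm (show j' + 1 ≤ j by omega)]
  · linarith [capPos_mono hm (show j + 1 ≤ j' by omega)]

end Cells

theorem lt_or_lt_of_notMem_cap {m : ℕ} {p : V3} (hp : p ∉ U m) {l : ℕ} (hl : l < m)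
    (hz : -11/20 < p 2) (hzy : p 2 ≤ p 1 - 1/20) (hyz : p 1 + p 2 ≤ -1/20) :
    p 0 < capPos m l + (p 2 + 11/20) ∨ capPos m l + 1 - (p 2 + 11/20) < p 0 := by
  by_contra! h
  exact hp (mem_U_iff.2 (Or.inr (Or.inr ⟨l, hl, by
    refine ⟨?_, ?_, ?_, ?_, ?_, ?_, ?_, ?_⟩ <;> linarith⟩)))

section Classification

variable {m : ℕ} (hm : 0 < m) {p : V3}
include hm

theorem mem_cell_or_eq_outer_of_capLevel (hp : p ∉ U m) (hy : -(finGap m / 4) < p 1)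
    (hy0 : p 1 < 0) (hx : 1/8 ≤ p 0) (hx' : p 0 ≤ 7/8) (hz : -11/20 < p 2)
    (hz0 : p 2 < p 1 + finHeight m 0) :
    (∃ i j, i + 1 < m ∧ j + 1 < m ∧ p ∈ cell m i j) ∨
      connectedComponentIn (U m)ᶜ p = outerComponent m := by
  have hδ := finGap_pos hm
  have := finHeight_le hm 0
  have hcap (l : ℕ) (hl : l < m) := lt_or_lt_of_notMem_cap hp hl hz
    (by linarith) (by linarith)
  by_cases hr : capPos m (m - 1) + 1 - (p 2 + 11/20) < p 0
  · refine Or.inr (connectedComponentIn_eq_outer_of_right hm hp fun j hj => ?_)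
    have := capPos_mono hm (show j ≤ m - 1 by omega)
    constructor <;> linarith
  by_cases hl : capPos m 0 + 1 - (p 2 + 11/20) < p 0
  swap
  · refine Or.inr (connectedComponentIn_eq_outer_of_left hm hp (by linarith) fun j hj => ?_)
    have := capPos_mono hm (Nat.zero_le j)
    rcases hcap j hj with h | h <;> linarith
  obtain ⟨j, hj, hjr, hjl⟩ :=
    exists_lt_and_not_succ (P := fun l => capPos m l + 1 - (p 2 + 11/20) < p 0) hl hr
  have hjl' := (hcap (j + 1) (by omega)).resolve_right hjl
  have := capPos_succ m j
  by_cases hb : p 2 < p 1 + finHeight m (m - 1)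
  -- below the lowest fin, the roofs of caps `j` and `j + 1` overlap
  · have := capGap_eq_finHeight_last hm
    linarith
  obtain ⟨k, hk, hzk, hzk'⟩ :=
    exists_lt_and_not_succ (P := fun l => p 2 < p 1 + finHeight m l) hz0 hb
  simp only [not_lt] at hzk'
  have := finHeight_succ m k
  rcases le_or_gt (p 2) (finHeight m (k + 1) - p 1) with hband | hgap
  · exact absurd (mem_U_iff.2 (Or.inr (Or.inl ⟨k + 1, by omega, by
      refine ⟨?_, ?_, ?_, ?_, ?_, ?_, ?_, ?_⟩ <;> linarith [finGap_le hm]⟩))) hp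
  · exact Or.inl ⟨k, j, by omega, by omega, hy0, by linarith, by linarith, by linarith,
      by linarith⟩

theorem mem_cell_or_eq_outer (hp : p ∉ U m) (hy : -(finGap m / 4) < p 1)
    (hy' : p 1 < finGap m / 4) (hz : p 2 < finGap m / 4) :
    (∃ i j, i + 1 < m ∧ j + 1 < m ∧ p ∈ cell m i j) ∨
      connectedComponentIn (U m)ᶜ p = outerComponent m := by
  have hδ := finGap_pos hm
  have := finGap_le hm
  have h0 : finHeight m 0 = -1/20 - finGap m / 2 := by simp [finHeight]
  rcases lt_or_ge (p 0) 0 with hx0 | hx0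
  · exact Or.inr (connectedComponentIn_eq_outer_of_mem hm (Or.inl (Or.inl (Or.inl hx0))))
  rcases le_or_gt (p 1 + finHeight m 0) (p 2) with hz0 | hz0
  · exact Or.inr (connectedComponentIn_eq_outer_of_up hm hp hz0)
  rcases lt_or_ge (p 0) (1/8) with hx1 | hx1
  · refine Or.inr (connectedComponentIn_eq_outer_of_left hm hp (by linarith) fun j hj => ?_)
    linarith [le_capPos hm j]
  rcases lt_or_ge (7/8) (p 0) with hx2 | hx2
  · refine Or.inr (connectedComponentIn_eq_outer_of_right hm hp fun j hj => ?_)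
    have := capPos_le hm hj
    constructor <;> linarith
  rcases lt_or_ge (p 2 - p 1) (-21/20) with hzy | hzy
  · exact Or.inr (connectedComponentIn_eq_outer_of_mem hm (Or.inr hzy))
  rcases le_or_gt (p 2) (-11/20) with hw | hw
  · refine absurd (mem_U_iff.2 (Or.inr (Or.inr ⟨0, hm, ?_⟩))) hp
    rw [capPos_zero]
    refine ⟨?_, ?_, ?_, ?_, ?_, ?_, ?_, ?_⟩ <;> linarith
  rcases le_or_gt 0 (p 1) with hy0 | hy0
  · exact absurd (mem_U_iff.2 (Or.inl (by refine ⟨?_, ?_, ?_, ?_, ?_, ?_, ?_, ?_⟩ <;> linarith)))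
      hp
  exact mem_cell_or_eq_outer_of_capLevel hm hp hy hy0 hx1 hx2 hw hz0

end Classification

def touchingComponents (m : ℕ) : Set (Set V3) :=
  {C | (∃ x ∈ (U m)ᶜ, C = connectedComponentIn (U m)ᶜ x) ∧ (closure C ∩ Fwarm).Nonempty}

section Count

variable {m : ℕ} (hm : 0 < m)
include hm

theorem outer_subset_outerComponent : outer ⊆ outerComponent m := by
  intro q hq
  rw [← connectedComponentIn_eq_outer_of_mem hm hq]
  exact mem_connectedComponentIn (outer_subset_compl hm hq)

theorem outerComponent_mem_touchingComponents : outerComponent m ∈ touchingComponents m := by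
  refine ⟨⟨![-1, -1, 0], outer_subset_compl hm (Or.inl (Or.inl (Or.inl (by simp)))), rfl⟩,
    0, mem_closure_of_ray (v := ![-1, 0, 0]) one_pos fun s hs _ => ?_, ?_⟩
  · exact outer_subset_outerComponent hm (Or.inl (Or.inl (Or.inl (by simpa using hs))))
  · simp [mem_Fwarm_iff]

theorem cell_mem_touchingComponents {i j : ℕ} (hi : i + 1 < m) (hj : j + 1 < m) :
    cell m i j ∈ touchingComponents m := by
  have hp := mem_cell (j := j) hi (s := finGap m / 4) (by linarith [finGap_pos hm])
    (by linarith [finGap_pos hm])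
  exact ⟨⟨_, cell_subset_compl hm hp, (connectedComponentIn_eq_cell hm hi hj hp).symm⟩,
    cell_touches_facet hm hi hj⟩

theorem touchingComponents_eq [DecidableEq (Set V3)] :
    touchingComponents m = ↑(insert (outerComponent m)
      ((Finset.range (m - 1) ×ˢ Finset.range (m - 1)).image fun ij => cell m ij.1 ij.2)) := by
  refine Subset.antisymm ?_ ?_
  · rintro C ⟨⟨x, -, rfl⟩, f, hfC, hfF⟩
    obtain ⟨q, hqC, hfq⟩ := Metric.mem_closure_iff.1 hfC (finGap m / 4) (by
      linarith [finGap_pos hm])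
    obtain ⟨-, -, hf1, -, hf2⟩ := mem_Fwarm_iff.1 hfF
    have hd (k : Fin 3) := abs_lt.1 ((Real.dist_eq _ _ ▸ dist_le_pi_dist f q k).trans_lt hfq)
    have hq : q ∉ U m := connectedComponentIn_subset _ _ hqC
    rw [connectedComponentIn_eq hqC]
    rcases mem_cell_or_eq_outer hm hq (by linarith [hd 1]) (by linarith [hd 1])
      (by linarith [hd 2]) with ⟨i, j, hi, hj, hqc⟩ | h
    · refine Finset.mem_insert_of_mem (Finset.mem_image.2 ⟨(i, j), ?_, ?_⟩)
      · simp only [Finset.mem_product, Finset.mem_range]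
        omega
      · exact (connectedComponentIn_eq_cell hm hi hj hqc).symm
    · exact h ▸ Finset.mem_insert_self _ _
  · intro C hC
    simp only [Finset.coe_insert, Finset.coe_image, Finset.coe_product, Finset.coe_range,
      mem_insert_iff, mem_image, mem_prod, mem_Iio] at hC
    rcases hC with rfl | ⟨⟨i, j⟩, ⟨hi, hj⟩, rfl⟩
    · exact outerComponent_mem_touchingComponents hm
    · exact cell_mem_touchingComponents hm (by omega) (by omega)

theorem ncard_touchingComponents : (touchingComponents m).ncard = (m - 1) ^ 2 + 1 := by
  classical
  rw [touchingComponents_eq hm, ncard_coe_finset, Finset.card_insert_of_notMem,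
    Finset.card_image_of_injOn, Finset.card_product, Finset.card_range, sq]
  · rintro ⟨i, j⟩ hij ⟨i', j'⟩ - h
    simp only [Finset.coe_product, Finset.coe_range, mem_prod, mem_Iio] at hij
    obtain ⟨rfl, rfl⟩ := cell_inj hm (by omega) h
    rfl
  · simp only [Finset.mem_image, not_exists, not_and]
    rintro ⟨i, j⟩ - h
    have hp := outer_subset_outerComponent hm (show ![-1, -1, 0] ∈ outer from
      Or.inl (Or.inl (Or.inl (by simp))))
    rw [← h] at hp
    obtain ⟨-, hp2, -⟩ := hp
    simp at hp2
    linarith [finHeight_le hm i, finGap_pos hm]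

end Count

end ManyHoles

/-- **Warm-up construction.** There is a constant `c₀ > 0` such that for every
positive integer `m` there are `2m` translates of `Kwarm` which, together with
`Kwarm` itself, form a union `U` such that at least `c₀·m²` connected components
of the complement of `U` have closure intersecting the facet `F`. -/
theorem many_holes_touching_facet :
    ∃ c₀ : ℝ, 0 < c₀ ∧
      ∀ m : ℕ, 0 < m →
        ∃ t : Fin (2 * m) → (Fin 3 → ℝ),
          c₀ * (m : ℝ) ^ 2 ≤
            ({C : Set (Fin 3 → ℝ) |
                (∃ x ∈ (Kwarm ∪ ⋃ i, t i +ᵥ Kwarm)ᶜ,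
                  C = connectedComponentIn (Kwarm ∪ ⋃ i, t i +ᵥ Kwarm)ᶜ x) ∧
                (closure C ∩ Fwarm).Nonempty}).ncard := by
  refine ⟨1/4, by norm_num, fun m hm => ⟨ManyHoles.shift m, ?_⟩⟩
  change 1/4 * (m : ℝ) ^ 2 ≤ (ManyHoles.touchingComponents m).ncard
  rw [ManyHoles.ncard_touchingComponents hm]
  push_cast [Nat.cast_sub (show 1 ≤ m from hm)]
  nlinarith [sq_nonneg (3 * (m : ℝ) - 4)]
end

section
/- For all integers j ≥ 1 and k ≥ 1, setting J = (j+1)³, the inequality (J − 1)·(j³ + J) < J·k·(k+1)·((k+1)² + (J − 1)·k²) holds. -/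
/-- **Key arithmetic inequality.** For integers `j, k ≥ 1`, with `J = (j+1)³`,
one has `(J − 1)·(j³ + J) < J·k·(k+1)·((k+1)² + (J − 1)·k²)`. -/
theorem key_inequality (j k : ℤ) (hj : 1 ≤ j) (hk : 1 ≤ k) :
    ((j + 1) ^ 3 - 1) * (j ^ 3 + (j + 1) ^ 3) <
      (j + 1) ^ 3 * (k * (k + 1) * ((k + 1) ^ 2 + ((j + 1) ^ 3 - 1) * k ^ 2)) := by
  have hJ : (7:ℤ) ≤ (j+1)^3 - 1 := by
    nlinarith [pow_le_pow_left₀ (by linarith : (0:ℤ) ≤ 2) (by linarith : (2:ℤ) ≤ j+1) 3]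
  have hJ0 : (8:ℤ) ≤ (j+1)^3 := by nlinarith
  have hjJ : j^3 < (j+1)^3 := by nlinarith
  have hkk : 2 ≤ k*(k+1) := by nlinarith
  have hk2 : 1 ≤ k^2 := by nlinarith
  have hk4 : 4 ≤ (k+1)^2 := by nlinarith
  have h1 : ((j + 1) ^ 3 - 1) * (j ^ 3 + (j + 1) ^ 3) < ((j+1)^3 - 1) * (2*(j+1)^3) := by
    apply mul_lt_mul_of_pos_left (by linarith) (by linarith)
  have h2 : (4 + ((j+1)^3-1)) * 2 ≤ (k * (k + 1) * ((k + 1) ^ 2 + ((j + 1) ^ 3 - 1) * k ^ 2)) := by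
    have : 4 + ((j+1)^3-1) ≤ (k + 1) ^ 2 + ((j + 1) ^ 3 - 1) * k ^ 2 := by nlinarith
    nlinarith
  nlinarith [mul_le_mul_of_nonneg_left h2 (by linarith : (0:ℤ) ≤ (j+1)^3)]
end
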